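/- Let γ > 0 and let (α_n) be a sequence of positive reals with liminf_{n→∞} α_n > 1, and set h_n := α_n·n. Then [x^n]((1−x)^{−γ}·e^{h_n x}) ∼ (1/(1−α_n^{−1}))^{γ} · h_n^n/n! as n → ∞. -/

import Mathlib

/-!
Write `c j = Γ(j + γ) / (Γ(γ) j!) = Ring.choose (γ + j - 1) j` and `h = α n`. Substituting
`j = n - k` and using `h^(n-j) / (n-j)! = (h^n / n!) · α⁻ʲ · n.descFactorial j / nʲ`, the
coefficient becomes `(h^n / n!) · ∑ j, c j α⁻ʲ w_n(j)` with weights `w_n(j) = n.descFactorial j / nʲ`,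
while the binomial series gives `(1 - α⁻¹)^(-γ) = ∑ j, c j α⁻ʲ`. The weights lie in `[0, 1]` and
tend to `1` for each fixed `j`; since eventually `α_n⁻¹ ≤ q₀ := (1 + ε)⁻¹ < 1` and the full sum is
at least `c 0 = 1`, the relative error is at most `∑ j, c j q₀ʲ (1 - w_n(j))`, which tends to `0`
by dominated convergence for series (Tannery's theorem).
-/

open Filter Topology Finset
open scoped Nat

lemma Real.Gamma_add_nat_eq_mul_ascPochhammer {γ : ℝ} (hγ : 0 < γ) (j : ℕ) :
    Real.Gamma (γ + j) = Real.Gamma γ * (ascPochhammer ℝ j).eval γ := by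
  induction j with
  | zero => simp
  | succ j ih =>
    rw [Nat.cast_succ, ← add_assoc, Real.Gamma_add_one (by positivity), ih,
      ascPochhammer_succ_eval]
    ring

lemma Real.Gamma_nat_add_div_eq_choose {γ : ℝ} (hγ : 0 < γ) (j : ℕ) :
    Real.Gamma (j + γ) / (Real.Gamma γ * j !) = Ring.choose (γ + j - 1) j := by
  have h := Ring.factorial_nsmul_multichoose_eq_ascPochhammer γ j
  rw [Ring.multichoose_eq, nsmul_eq_mul, Polynomial.ascPochhammer_smeval_eq_eval] at h
  rw [add_comm, Real.Gamma_add_nat_eq_mul_ascPochhammer hγ, ← h]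
  have := (Real.Gamma_pos_of_pos hγ).ne'
  field_simp

lemma Ring.choose_add_sub_one_nonneg {γ : ℝ} (hγ : 0 < γ) (j : ℕ) :
    0 ≤ Ring.choose (γ + j - 1) j := by
  rw [← Real.Gamma_nat_add_div_eq_choose hγ]
  have := Real.Gamma_pos_of_pos hγ
  have := Real.Gamma_pos_of_pos (by positivity : (0 : ℝ) < j + γ)
  positivity

lemma hasSum_choose_add_sub_one_mul_pow (γ : ℝ) {x : ℝ} (hx : |x| < 1) :
    HasSum (fun j : ℕ => Ring.choose (γ + j - 1) j * x ^ j) (1 / (1 - x) ^ γ) := by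
  simpa [FormalMultilinearSeries.ofScalars_apply_eq, mul_comm] using
    (Real.one_div_one_sub_rpow_hasFPowerSeriesOnBall_zero γ).hasSum (y := x)
      (by simpa [enorm_eq_nnnorm, ← NNReal.coe_lt_one] using hx)

lemma descFactorial_div_pow_le_one (n j : ℕ) : (n.descFactorial j : ℝ) / n ^ j ≤ 1 :=
  div_le_one_of_le₀ (by exact_mod_cast Nat.descFactorial_le_pow n j) (by positivity)

lemma tendsto_descFactorial_div_pow (j : ℕ) :
    Tendsto (fun n : ℕ => (n.descFactorial j : ℝ) / n ^ j) atTop (𝓝 1) := by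
  refine (Asymptotics.isEquivalent_iff_tendsto_one ?_).1 (isEquivalent_descFactorial j)
  filter_upwards [eventually_ne_atTop 0] with n hn
  positivity

lemma tendsto_tsum_mul_one_sub_descFactorial_div_pow {b : ℕ → ℝ} (hb : Summable b) :
    Tendsto (fun n : ℕ => ∑' j, b j * (1 - n.descFactorial j / n ^ j)) atTop (𝓝 0) := by
  have := tendsto_tsum_of_dominated_convergence (𝓕 := atTop) hb.norm
    (fun j => ((tendsto_descFactorial_div_pow j).const_sub 1).const_mul (b j))
    (Eventually.of_forall fun n j => ?_)
  · simpa using this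
  have h0 : 0 ≤ (n.descFactorial j : ℝ) / n ^ j := by positivity
  have h1 := descFactorial_div_pow_le_one n j
  rw [norm_mul, Real.norm_eq_abs (1 - _), abs_of_nonneg (by linarith)]
  exact mul_le_of_le_one_right (norm_nonneg _) (by linarith)

lemma sum_range_mul_pow_div_factorial_eq_tsum (b : ℕ → ℝ) {α : ℝ} (hα : α ≠ 0) {n : ℕ}
    (hn : n ≠ 0) :
    ∑ k ∈ range (n + 1), b (n - k) * (α * n) ^ k / k ! =
      (α * n) ^ n / n ! * ∑' j, b j * α⁻¹ ^ j * (n.descFactorial j / n ^ j) := by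
  rw [tsum_eq_sum (s := range (n + 1)) fun j hj => by
      rw [Nat.descFactorial_eq_zero_iff_lt.2 (by simpa using hj)]; simp,
    ← sum_range_reflect, mul_sum]
  refine sum_congr rfl fun j hj => ?_
  have hjn : j ≤ n := Nat.lt_succ_iff.1 (mem_range.1 hj)
  have hfac : ((n - j) ! : ℝ) * n.descFactorial j = n ! := by
    exact_mod_cast Nat.factorial_mul_descFactorial hjn
  have hpow : (α * n) ^ (n - j) * (α * n) ^ j = (α * n) ^ n := pow_sub_mul_pow _ hjn
  rw [show n + 1 - 1 - j = n - j by omega, show n - (n - j) = j by omega, ← hfac, ← hpow]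
  have : (n : ℝ) ≠ 0 := by exact_mod_cast hn
  have : (n.descFactorial j : ℝ) ≠ 0 := by exact_mod_cast (Nat.descFactorial_pos.2 hjn).ne'
  rw [inv_pow]
  field_simp
  ring

lemma abs_tsum_mul_div_sub_one_le {u v w : ℕ → ℝ} {s : ℝ} (hu : HasSum u s) (hs : 1 ≤ s)
    (hv : Summable v) (hu0 : ∀ j, 0 ≤ u j) (huv : ∀ j, u j ≤ v j) (hw0 : ∀ j, 0 ≤ w j)
    (hw1 : ∀ j, w j ≤ 1) :
    |(∑' j, u j * w j) / s - 1| ≤ ∑' j, v j * (1 - w j) := by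
  have hw : ∀ j, 0 ≤ 1 - w j := fun j => sub_nonneg.2 (hw1 j)
  have hw' : ∀ j, 1 - w j ≤ 1 := fun j => sub_le_self _ (hw0 j)
  have huw : Summable fun j => u j * (1 - w j) :=
    hu.summable.of_nonneg_of_le (fun j => mul_nonneg (hu0 j) (hw j))
      fun j => mul_le_of_le_one_right (hu0 j) (hw' j)
  have hvw : Summable fun j => v j * (1 - w j) :=
    hv.of_nonneg_of_le (fun j => mul_nonneg ((hu0 j).trans (huv j)) (hw j))
      fun j => mul_le_of_le_one_right ((hu0 j).trans (huv j)) (hw' j)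
  have hdefect : (∑' j, u j * w j) / s - 1 = -(∑' j, u j * (1 - w j)) / s := by
    have : HasSum (fun j => u j * w j) (s - ∑' j, u j * (1 - w j)) := by
      simpa only [mul_sub, mul_one, sub_sub_cancel] using hu.sub huw.hasSum
    rw [this.tsum_eq]
    field_simp
    ring
  have hnonneg : 0 ≤ ∑' j, u j * (1 - w j) := tsum_nonneg fun j => mul_nonneg (hu0 j) (hw j)
  rw [hdefect, abs_div, abs_neg, abs_of_nonneg hnonneg, abs_of_pos (by linarith)]
  calc (∑' j, u j * (1 - w j)) / s ≤ ∑' j, u j * (1 - w j) := div_le_self hnonneg hs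
    _ ≤ ∑' j, v j * (1 - w j) :=
      huw.tsum_le_tsum (fun j => mul_le_mul_of_nonneg_right (huv j) (hw j)) hvw

theorem stmt_10
    (γ : ℝ) (hγ : 0 < γ) (a : ℕ → ℝ) (ha : ∀ n : ℕ, 0 < a n)
    (hliminf : ∃ ε : ℝ, 0 < ε ∧ ∀ᶠ n : ℕ in atTop, 1 + ε ≤ a n) :
    Tendsto (fun n : ℕ =>
      (∑ k ∈ Finset.range (n + 1),
        Real.Gamma (((n - k : ℕ) : ℝ) + γ) / (Real.Gamma γ * (Nat.factorial (n - k) : ℝ)) *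
          (a n * (n : ℝ)) ^ k / (Nat.factorial k : ℝ)) /
      ((1 / (1 - (a n)⁻¹)) ^ γ * (a n * (n : ℝ)) ^ n / (Nat.factorial n : ℝ))) atTop (nhds 1) := by
  obtain ⟨ε, hε, hev⟩ := hliminf
  set c : ℕ → ℝ := fun j => Ring.choose (γ + j - 1) j
  have hc : ∀ j, 0 ≤ c j := Ring.choose_add_sub_one_nonneg hγ
  set q₀ : ℝ := (1 + ε)⁻¹
  have hq₀ : 0 ≤ q₀ ∧ q₀ < 1 := ⟨by positivity, inv_lt_one_of_one_lt₀ (by linarith)⟩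
  have hv := (hasSum_choose_add_sub_one_mul_pow γ (abs_lt.2 ⟨by linarith, hq₀.2⟩)).summable
  rw [← tendsto_sub_nhds_zero_iff]
  refine squeeze_zero_norm' ?_ (tendsto_tsum_mul_one_sub_descFactorial_div_pow hv)
  filter_upwards [hev, eventually_ne_atTop 0] with n han hn
  set q := (a n)⁻¹
  have hq : 0 ≤ q ∧ q ≤ q₀ := ⟨inv_nonneg.2 (ha n).le, inv_anti₀ (by positivity) han⟩
  have hs := hasSum_choose_add_sub_one_mul_pow γ (abs_lt.2 ⟨by linarith, hq.2.trans_lt hq₀.2⟩)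
  have hs1 : 1 ≤ 1 / (1 - q) ^ γ := by
    simpa [c] using le_hasSum hs 0 fun j _ => mul_nonneg (hc j) (pow_nonneg hq.1 j)
  have hratio (T : ℝ) : (a n * n) ^ n / n ! * T / ((1 / (1 - q)) ^ γ * (a n * n) ^ n / n !) =
      T / (1 / (1 - q) ^ γ) := by
    have : (a n * n) ^ n ≠ 0 := by have := ha n; positivity
    rw [Real.div_rpow zero_le_one (by linarith [hq₀.2]), Real.one_rpow]
    field_simp
  simp_rw [Real.Gamma_nat_add_div_eq_choose hγ]
  rw [sum_range_mul_pow_div_factorial_eq_tsum c (ha n).ne' hn, hratio, Real.norm_eq_abs]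
  exact abs_tsum_mul_div_sub_one_le hs hs1 hv (fun j => mul_nonneg (hc j) (pow_nonneg hq.1 j))
    (fun j => mul_le_mul_of_nonneg_left (pow_le_pow_left₀ hq.1 hq.2 j) (hc j))
    (fun j => by positivity) (descFactorial_div_pow_le_one n)
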